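/- Fix integers k ≥ 3, m ≥ 1, l ≥ 1, and real n ≥ 1. With r = n^{1-1/k} and s = n^{-(2k-l-3)/(k(l+1)(m+2))}, each of the four terms s·r^2, s·r·√(n^{k-1}/r^{k-2}), √(n^{k-1}/(r^{k-3} s^{m-1})), and r^{l/(l+1)}·√(n^k/(r^{k-1} s^m)) is at most n^{2 - 2/k - (2k-l-3)/(k(l+1)(m+2))}. -/
import Mathlib


/-- Optimization in the main H-containment theorem: with r = n^(1-1/k) and
s = n^(-(2k-l-3)/(k(l+1)(m+2))), each of the four stage-complexity terms is at
most n^(2 - 2/k - (2k-l-3)/(k(l+1)(m+2))). -/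
theorem stmt_8 (k m l : ℕ) (hk : 3 ≤ k) (hm : 1 ≤ m) (hl1 : 1 ≤ l) (hl2 : l ≤ k - 1)
    (n : ℝ) (hn : 1 ≤ n)
    (g : ℝ) (hg : g = (2 * (k : ℝ) - l - 3) / ((k : ℝ) * (l + 1) * (m + 2)))
    (r : ℝ) (hr : r = n ^ (1 - 1 / (k : ℝ)))
    (s : ℝ) (hs : s = n ^ (-g)) :
    s * r ^ 2 ≤ n ^ (2 - 2 / (k : ℝ) - g) ∧
    s * r * Real.sqrt (n ^ (k - 1) / r ^ (k - 2)) ≤ n ^ (2 - 2 / (k : ℝ) - g) ∧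
    Real.sqrt (n ^ (k - 1) / (r ^ (k - 3) * s ^ (m - 1))) ≤ n ^ (2 - 2 / (k : ℝ) - g) ∧
    r ^ ((l : ℝ) / (l + 1)) * Real.sqrt (n ^ k / (r ^ (k - 1) * s ^ m))
      ≤ n ^ (2 - 2 / (k : ℝ) - g) := by
  have hn0 : (0:ℝ) < n := lt_of_lt_of_le one_pos hn
  have hn0' : (0:ℝ) ≤ n := hn0.le
  have hc : (3:ℝ) ≤ (k:ℝ) := by exact_mod_cast hk
  have hL : (1:ℝ) ≤ (l:ℝ) := by exact_mod_cast hl1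
  have hM : (1:ℝ) ≤ (m:ℝ) := by exact_mod_cast hm
  have hlk : (l:ℝ) + 1 ≤ (k:ℝ) := by exact_mod_cast (by omega : l + 1 ≤ k)
  have ek1 : ((k-1:ℕ):ℝ) = (k:ℝ) - 1 := by push_cast [Nat.cast_sub (by omega : 1 ≤ k)]; ring
  have ek2 : ((k-2:ℕ):ℝ) = (k:ℝ) - 2 := by push_cast [Nat.cast_sub (by omega : 2 ≤ k)]; ring
  have ek3 : ((k-3:ℕ):ℝ) = (k:ℝ) - 3 := by push_cast [Nat.cast_sub hk]; ring
  have em1 : ((m-1:ℕ):ℝ) = (m:ℝ) - 1 := by push_cast [Nat.cast_sub hm]; ring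
  have hk0 : (0:ℝ) < (k:ℝ) := by linarith
  have hL0 : (0:ℝ) < (l:ℝ) + 1 := by linarith
  have hM0 : (0:ℝ) < (m:ℝ) + 2 := by linarith
  subst hg hr hs
  refine ⟨?_, ?_, ?_, ?_⟩ <;>
    simp only [Real.sqrt_eq_rpow, ← Real.rpow_natCast, ← Real.rpow_mul hn0',
      ← Real.rpow_add hn0, ← Real.rpow_sub hn0] <;>
    apply Real.rpow_le_rpow_of_exponent_le hn <;>
    push_cast [ek1, ek2, ek3, em1]
  · apply le_of_eq; field_simp; ring
  · apply le_of_eq; field_simp; ring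
  · rw [← sub_nonneg]
    have key : 2 - 2 / (k:ℝ) - (2 * (k:ℝ) - (l:ℝ) - 3) / ((k:ℝ) * ((l:ℝ) + 1) * ((m:ℝ) + 2))
        - ((k:ℝ) - 1 - ((1 - 1 / (k:ℝ)) * ((k:ℝ) - 3)
          + -((2 * (k:ℝ) - (l:ℝ) - 3) / ((k:ℝ) * ((l:ℝ) + 1) * ((m:ℝ) + 2))) * ((m:ℝ) - 1))) * (1 / 2)
        = (((m:ℝ) + 1) * ((k:ℝ) * ((l:ℝ) - 1) + 2) + ((k:ℝ) - 1) * ((l:ℝ) + 1))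
          / (2 * (k:ℝ) * ((l:ℝ) + 1) * ((m:ℝ) + 2)) := by
      field_simp
      ring
    rw [key]
    apply div_nonneg
    · nlinarith [mul_nonneg (by linarith : (0:ℝ) ≤ (m:ℝ) + 1)
        (by nlinarith : (0:ℝ) ≤ (k:ℝ) * ((l:ℝ) - 1) + 2)]
    · positivity
  · apply le_of_eq; field_simp; ring
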